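/- For every b ∈ ℂ^× and every m ∈ ℤ, there exists a unique ℂ-algebra homomorphism θ_{b,m} : B_ν → B_ν such that θ_{b,m}(a) = b·k^m·a, θ_{b,m}(a⁺) = b^{-1}·a⁺·k^{-m}, θ_{b,m}(k) = k and θ_{b,m}(k⁻) = k⁻ (where k^m denotes the m-th power of k, using k⁻ for negative exponents), and each θ_{b,m} is bijective (an algebra automorphism of B_ν). -/

import Mathlib

noncomputable section

/-- Generators of the quantized oscillator algebra: `0 ↦ a⁺`, `1 ↦ a`, `2 ↦ k`, `3 ↦ k⁻`. -/
def G : Fin 4 → FreeAlgebra ℂ (Fin 4) := FreeAlgebra.ι ℂ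

/-- The defining relations of the quantized oscillator algebra `B_ν`:
`a·a⁺ − ν⁻¹·a⁺·a = k`, `a·a⁺ − ν·a⁺·a = k⁻`, `k·k⁻ = k⁻·k = 1`,
`k·a = ν⁻¹·a·k`, `k·a⁺ = ν·a⁺·k`. -/
inductive OscRel (ν : ℂ) : FreeAlgebra ℂ (Fin 4) → FreeAlgebra ℂ (Fin 4) → Prop
  | r1 : OscRel ν (G 1 * G 0 - ν⁻¹ • (G 0 * G 1)) (G 2)
  | r2 : OscRel ν (G 1 * G 0 - ν • (G 0 * G 1)) (G 3)
  | r3 : OscRel ν (G 2 * G 3) 1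
  | r4 : OscRel ν (G 3 * G 2) 1
  | r5 : OscRel ν (G 2 * G 1) (ν⁻¹ • (G 1 * G 2))
  | r6 : OscRel ν (G 2 * G 0) (ν • (G 0 * G 2))

/-- The quantized oscillator algebra `B_ν`, as the quotient of the free `ℂ`-algebra on
four generators `a⁺, a, k, k⁻` by the defining relations. -/
abbrev Osc (ν : ℂ) := RingQuot (OscRel ν)

/-- The creation generator `a⁺` of `B_ν`. -/
def ap (ν : ℂ) : Osc ν := RingQuot.mkAlgHom ℂ (OscRel ν) (G 0)

/-- The annihilation generator `a` of `B_ν`. -/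
def an (ν : ℂ) : Osc ν := RingQuot.mkAlgHom ℂ (OscRel ν) (G 1)

/-- The generator `k` of `B_ν`. -/
def kk (ν : ℂ) : Osc ν := RingQuot.mkAlgHom ℂ (OscRel ν) (G 2)

/-- The generator `k⁻` (the two-sided inverse of `k`) of `B_ν`. -/
def kinv (ν : ℂ) : Osc ν := RingQuot.mkAlgHom ℂ (OscRel ν) (G 3)

end

noncomputable section

/-- The integer power `k^m` in `B_ν`, using `k⁻` for negative exponents. -/
def kpow (ν : ℂ) (m : ℤ) : Osc ν :=
  if 0 ≤ m then kk ν ^ m.toNat else kinv ν ^ (-m).toNat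

/-!
By the universal property of `B_ν`, `θ_{b,m}` exists as soon as the proposed images of the
generators satisfy the defining relations. The relations involving `k` survive because `k`
commutes with its own powers. For the first two, `θ(a⁺)θ(a) = a⁺a` because the powers
`k^{-m}` and `k^m` cancel, and `θ(a)θ(a⁺) = k^m (a a⁺) k^{-m} = a a⁺` because `k` commutes with
`a a⁺` (its commutation factors `ν⁻¹` with `a` and `ν` with `a⁺` cancel).
Checking on generators, `θ_{b,m}` and `θ_{b⁻¹,-m}` are mutually inverse, and any two algebra
maps agreeing on the generators coincide.
-/

namespace Osc

variable {ν : ℂ}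

section Relations

variable (ν)

theorem an_mul_ap_sub_inv_smul : an ν * ap ν - ν⁻¹ • (ap ν * an ν) = kk ν := by
  simpa [an, ap, kk] using RingQuot.mkAlgHom_rel ℂ (OscRel.r1 (ν := ν))

theorem an_mul_ap_sub_smul : an ν * ap ν - ν • (ap ν * an ν) = kinv ν := by
  simpa [an, ap, kinv] using RingQuot.mkAlgHom_rel ℂ (OscRel.r2 (ν := ν))

theorem kk_mul_kinv : kk ν * kinv ν = 1 := by
  simpa [kk, kinv] using RingQuot.mkAlgHom_rel ℂ (OscRel.r3 (ν := ν))

theorem kinv_mul_kk : kinv ν * kk ν = 1 := by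
  simpa [kk, kinv] using RingQuot.mkAlgHom_rel ℂ (OscRel.r4 (ν := ν))

theorem kk_mul_an : kk ν * an ν = ν⁻¹ • (an ν * kk ν) := by
  simpa [kk, an] using RingQuot.mkAlgHom_rel ℂ (OscRel.r5 (ν := ν))

theorem kk_mul_ap : kk ν * ap ν = ν • (ap ν * kk ν) := by
  simpa [kk, ap] using RingQuot.mkAlgHom_rel ℂ (OscRel.r6 (ν := ν))

end Relations

section UniversalProperty

variable {A : Type*} [Ring A] [Algebra ℂ A]

def lift (p a k l : A) (h₁ : a * p - ν⁻¹ • (p * a) = k) (h₂ : a * p - ν • (p * a) = l)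
    (h₃ : k * l = 1) (h₄ : l * k = 1) (h₅ : k * a = ν⁻¹ • (a * k))
    (h₆ : k * p = ν • (p * k)) : Osc ν →ₐ[ℂ] A :=
  RingQuot.liftAlgHom ℂ ⟨FreeAlgebra.lift ℂ ![p, a, k, l], by
    rintro _ _ (_ | _ | _ | _ | _ | _) <;> simpa [G]⟩

variable {p a k l : A} {h₁ : a * p - ν⁻¹ • (p * a) = k} {h₂ : a * p - ν • (p * a) = l}
  {h₃ : k * l = 1} {h₄ : l * k = 1} {h₅ : k * a = ν⁻¹ • (a * k)} {h₆ : k * p = ν • (p * k)}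

@[simp]
theorem lift_ap : lift p a k l h₁ h₂ h₃ h₄ h₅ h₆ (ap ν) = p := by
  simp [lift, ap, G]

@[simp]
theorem lift_an : lift p a k l h₁ h₂ h₃ h₄ h₅ h₆ (an ν) = a := by
  simp [lift, an, G]

@[simp]
theorem lift_kk : lift p a k l h₁ h₂ h₃ h₄ h₅ h₆ (kk ν) = k := by
  simp [lift, kk, G]

@[simp]
theorem lift_kinv : lift p a k l h₁ h₂ h₃ h₄ h₅ h₆ (kinv ν) = l := by
  simp [lift, kinv, G]

theorem hom_ext {f g : Osc ν →ₐ[ℂ] A} (hp : f (ap ν) = g (ap ν)) (ha : f (an ν) = g (an ν))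
    (hk : f (kk ν) = g (kk ν)) (hl : f (kinv ν) = g (kinv ν)) : f = g :=
  RingQuot.ringQuot_ext' ℂ f g <| FreeAlgebra.hom_ext <| funext fun i => by
    fin_cases i <;> assumption

end UniversalProperty

def kUnit (ν : ℂ) : (Osc ν)ˣ := ⟨kk ν, kinv ν, kk_mul_kinv ν, kinv_mul_kk ν⟩

theorem kpow_eq_kUnit_zpow (m : ℤ) : kpow ν m = ↑(kUnit ν ^ m) := by
  cases m with
  | ofNat n => simp [kpow, kUnit]
  | negSucc n =>
    rw [zpow_negSucc, ← inv_pow, Units.val_pow_eq_pow_val]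
    simp [kpow, kUnit]

theorem kpow_add (m n : ℤ) : kpow ν (m + n) = kpow ν m * kpow ν n := by
  simp only [kpow_eq_kUnit_zpow, zpow_add, Units.val_mul]

theorem kpow_zero : kpow ν 0 = 1 := by
  simp [kpow]

theorem commute_kpow_left {x : Osc ν} (h : Commute (kk ν) x) (m : ℤ) : Commute (kpow ν m) x := by
  rw [kpow_eq_kUnit_zpow]
  exact h.units_zpow_left (u := kUnit ν) m

theorem commute_kk_kpow (m : ℤ) : Commute (kk ν) (kpow ν m) :=
  (commute_kpow_left (Commute.refl (kk ν)) m).symm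

theorem commute_kk_an_mul_ap (hν : ν ≠ 0) : Commute (kk ν) (an ν * ap ν) := by
  rw [commute_iff_eq, ← mul_assoc, kk_mul_an, smul_mul_assoc, mul_assoc, kk_mul_ap,
    mul_smul_comm, smul_smul, inv_mul_cancel₀ hν, one_smul, mul_assoc]

section Twist

variable {b b' : ℂ} (m : ℤ)

theorem twist_an_mul_twist_ap (hν : ν ≠ 0) (hb : b ≠ 0) :
    b • (kpow ν m * an ν) * (b⁻¹ • (ap ν * kpow ν (-m))) = an ν * ap ν := by
  rw [smul_mul_smul_comm, mul_inv_cancel₀ hb, one_smul, ← mul_assoc, mul_assoc (kpow ν m),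
    (commute_kpow_left (commute_kk_an_mul_ap hν) m).eq, mul_assoc, ← kpow_add, add_neg_cancel,
    kpow_zero, mul_one]

theorem twist_ap_mul_twist_an (hb : b ≠ 0) :
    b⁻¹ • (ap ν * kpow ν (-m)) * (b • (kpow ν m * an ν)) = ap ν * an ν := by
  rw [smul_mul_smul_comm, inv_mul_cancel₀ hb, one_smul, mul_assoc, ← mul_assoc (kpow ν (-m)),
    ← kpow_add, neg_add_cancel, kpow_zero, one_mul]

theorem kk_mul_twist_an :
    kk ν * (b • (kpow ν m * an ν)) = ν⁻¹ • (b • (kpow ν m * an ν) * kk ν) := by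
  rw [mul_smul_comm, (commute_kk_kpow m).left_comm, kk_mul_an,
    mul_smul_comm, smul_comm, smul_mul_assoc, mul_assoc]

theorem kk_mul_twist_ap :
    kk ν * (b⁻¹ • (ap ν * kpow ν (-m))) = ν • (b⁻¹ • (ap ν * kpow ν (-m)) * kk ν) := by
  rw [mul_smul_comm, ← mul_assoc, kk_mul_ap, smul_mul_assoc, mul_assoc,
    (commute_kk_kpow (-m)).eq, smul_comm, smul_mul_assoc, mul_assoc]

def twist (hν : ν ≠ 0) (hb : b ≠ 0) : Osc ν →ₐ[ℂ] Osc ν :=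
  lift (b⁻¹ • (ap ν * kpow ν (-m))) (b • (kpow ν m * an ν)) (kk ν) (kinv ν)
    (by rw [twist_an_mul_twist_ap m hν hb, twist_ap_mul_twist_an m hb, an_mul_ap_sub_inv_smul])
    (by rw [twist_an_mul_twist_ap m hν hb, twist_ap_mul_twist_an m hb, an_mul_ap_sub_smul])
    (kk_mul_kinv ν) (kinv_mul_kk ν) (kk_mul_twist_an m) (kk_mul_twist_ap m)

variable (hν : ν ≠ 0) (hb : b ≠ 0)

@[simp]
theorem twist_ap : twist m hν hb (ap ν) = b⁻¹ • (ap ν * kpow ν (-m)) := lift_ap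

@[simp]
theorem twist_an : twist m hν hb (an ν) = b • (kpow ν m * an ν) := lift_an

@[simp]
theorem twist_kk : twist m hν hb (kk ν) = kk ν := lift_kk

@[simp]
theorem twist_kinv : twist m hν hb (kinv ν) = kinv ν := lift_kinv

@[simp]
theorem twist_kpow (n : ℤ) : twist m hν hb (kpow ν n) = kpow ν n := by
  unfold kpow
  split <;> simp

theorem twist_comp_twist {m' : ℤ} (hb' : b' ≠ 0) (hbb' : b * b' = 1) (hmm' : m + m' = 0) :
    (twist m hν hb).comp (twist m' hν hb') = AlgHom.id ℂ (Osc ν) := by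
  apply hom_ext
  · simp only [AlgHom.comp_apply, twist_ap, map_smul, map_mul, twist_kpow, smul_mul_assoc,
      smul_smul, mul_assoc, ← kpow_add, ← neg_add, hmm', neg_zero, kpow_zero, mul_one, ← mul_inv,
      mul_comm b', hbb', inv_one, one_smul, AlgHom.id_apply]
  · simp only [AlgHom.comp_apply, twist_an, map_smul, map_mul, twist_kpow, mul_smul_comm,
      smul_smul, ← mul_assoc, ← kpow_add, add_comm m', hmm', kpow_zero, one_mul, mul_comm b',
      hbb', one_smul, AlgHom.id_apply]
  · simp
  · simp

end Twist

end Osc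

/-- Lemma 4.4(ii): for every `b ∈ ℂˣ` and `m ∈ ℤ` there is a unique
`ℂ`-algebra homomorphism `θ_{b,m} : B_ν → B_ν` with `θ_{b,m}(a) = b·k^m·a`,
`θ_{b,m}(a⁺) = b⁻¹·a⁺·k^{−m}`, `θ_{b,m}(k) = k`, `θ_{b,m}(k⁻) = k⁻`, and it is
bijective. -/
theorem osc_twist_automorphism (ν : ℂ) (hν : ν ≠ 0) (b : ℂ) (hb : b ≠ 0) (m : ℤ) :
    ∃ θ : Osc ν →ₐ[ℂ] Osc ν,
      (θ (an ν) = b • (kpow ν m * an ν) ∧ θ (ap ν) = b⁻¹ • (ap ν * kpow ν (-m)) ∧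
        θ (kk ν) = kk ν ∧ θ (kinv ν) = kinv ν) ∧
      Function.Bijective θ ∧
      ∀ θ' : Osc ν →ₐ[ℂ] Osc ν,
        (θ' (an ν) = b • (kpow ν m * an ν) ∧ θ' (ap ν) = b⁻¹ • (ap ν * kpow ν (-m)) ∧
          θ' (kk ν) = kk ν ∧ θ' (kinv ν) = kinv ν) → θ' = θ := by
  refine ⟨Osc.twist m hν hb, ⟨Osc.twist_an m hν hb, Osc.twist_ap m hν hb, Osc.twist_kk m hν hb,
    Osc.twist_kinv m hν hb⟩, ?_, ?_⟩
  · have hb' := inv_ne_zero hb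
    exact (AlgEquiv.ofAlgHom _ _
      (Osc.twist_comp_twist m hν hb hb' (mul_inv_cancel₀ hb) (add_neg_cancel m))
      (Osc.twist_comp_twist (-m) hν hb' hb (inv_mul_cancel₀ hb) (neg_add_cancel m))).bijective
  · rintro θ' ⟨ha, hp, hk, hl⟩
    exact Osc.hom_ext (by simp [hp]) (by simp [ha]) (by simp [hk]) (by simp [hl])

end
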